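/- arXiv:2306.06635 — 6 statements merged into one kernel-verified Lean document; each statement's English description precedes it below -/
import Mathlib

section
/- There exist real parameters A1, A2, A3, A4, B1, B2, C1, C2 of the single-channel scalar 2-D SSM such that for every L ≥ 1, the L×L real matrix M defined by M i j = K(i,j) for i, j ∈ Fin L (where K is the convolution kernel of the 2-D SSM with those parameters) has rank L, i.e., the 2-D SSM can express full-rank kernels. (Theorem 1 of the paper.) -/
/-- The pair of (horizontal, vertical) states of the single-channel scalar 2-D SSM
with parameters `A1 A2 A3 A4 B1 B2` on input `u`, with zero initial states. -/
noncomputable def ssmState (A1 A2 A3 A4 B1 B2 : ℝ) (u : ℕ → ℕ → ℝ) : ℕ → ℕ → ℝ × ℝ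
  | 0, 0 => (B1 * u 0 0, B2 * u 0 0)
  | 0, j + 1 =>
      (A1 * (ssmState A1 A2 A3 A4 B1 B2 u 0 j).1
         + A2 * (ssmState A1 A2 A3 A4 B1 B2 u 0 j).2 + B1 * u 0 (j + 1),
       B2 * u 0 (j + 1))
  | i + 1, 0 =>
      (B1 * u (i + 1) 0,
       A3 * (ssmState A1 A2 A3 A4 B1 B2 u i 0).1
         + A4 * (ssmState A1 A2 A3 A4 B1 B2 u i 0).2 + B2 * u (i + 1) 0)
  | i + 1, j + 1 =>
      (A1 * (ssmState A1 A2 A3 A4 B1 B2 u (i + 1) j).1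
         + A2 * (ssmState A1 A2 A3 A4 B1 B2 u (i + 1) j).2 + B1 * u (i + 1) (j + 1),
       A3 * (ssmState A1 A2 A3 A4 B1 B2 u i (j + 1)).1
         + A4 * (ssmState A1 A2 A3 A4 B1 B2 u i (j + 1)).2 + B2 * u (i + 1) (j + 1))
  termination_by i j => (i, j)

/-- The output of the 2-D SSM. -/
noncomputable def ssmOutput (A1 A2 A3 A4 B1 B2 C1 C2 : ℝ) (u : ℕ → ℕ → ℝ) (i j : ℕ) : ℝ :=
  C1 * (ssmState A1 A2 A3 A4 B1 B2 u i j).1 + C2 * (ssmState A1 A2 A3 A4 B1 B2 u i j).2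

/-- The impulse input. -/
noncomputable def impulse : ℕ → ℕ → ℝ := fun i j => if i = 0 ∧ j = 0 then 1 else 0

/-- The convolution kernel of the 2-D SSM: output on the impulse input. -/
noncomputable def ssmKernel (A1 A2 A3 A4 B1 B2 C1 C2 : ℝ) (i j : ℕ) : ℝ :=
  ssmOutput A1 A2 A3 A4 B1 B2 C1 C2 impulse i j

open Matrix

lemma ssmState_ones_sum : ∀ i j : ℕ,
    (ssmState 1 1 1 1 1 1 impulse i j).1 + (ssmState 1 1 1 1 1 1 impulse i j).2
      = 2 * ((i + j).choose i) := by
  intro i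
  induction i with
  | zero =>
      intro j
      induction j with
      | zero => simp [ssmState, impulse]; norm_num
      | succ j ih =>
          simp only [ssmState, impulse] at ih ⊢
          simp at ih ⊢
          linarith
  | succ i ih =>
      intro j
      induction j with
      | zero =>
          have h := ih 0
          simp only [ssmState, impulse] at h ⊢
          simp at h ⊢
          linarith
      | succ j ihj =>
          have h1 := ih (j + 1)
          have hpascal : ((i + 1) + (j + 1)).choose (i + 1)
              = (i + (j + 1)).choose i + ((i + 1) + j).choose (i + 1) := by
            have he : (i + 1) + (j + 1) = (i + j + 1) + 1 := by ring
            rw [he, Nat.choose_succ_succ (i + j + 1) i]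
            congr 2 <;> ring
          simp only [ssmState, impulse] at ihj h1 ⊢
          simp at ihj h1 ⊢
          rw [hpascal]
          push_cast
          linarith

lemma ssmKernel_ones (i j : ℕ) :
    ssmKernel 1 1 1 1 1 1 1 1 i j = 2 * ((i + j).choose i) := by
  have := ssmState_ones_sum i j
  simp only [ssmKernel, ssmOutput, one_mul]
  linarith

lemma vandermonde_sym (i j : ℕ) :
    ∑ k ∈ Finset.range (i + 1), i.choose k * j.choose k = (i + j).choose i := by
  rw [Nat.add_choose_eq i j i, Finset.Nat.sum_antidiagonal_eq_sum_range_succ_mk]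
  rw [← Finset.sum_range_reflect]
  refine Finset.sum_congr rfl fun k hk => ?_
  rw [Finset.mem_range] at hk
  have hk' : k ≤ i := Nat.lt_succ_iff.mp hk
  have h1 : i + 1 - 1 - k = i - k := by omega
  rw [h1, Nat.choose_symm hk']

/-- **Theorem 1 of the paper.** The 8 parameters of the single-channel scalar 2-D SSM
can express full-rank kernels: there is a choice of parameters such that for every
`L ≥ 1`, the `L × L` matrix of kernel values has rank `L`. -/
theorem ssm_expresses_full_rank_kernels :
    ∃ A1 A2 A3 A4 B1 B2 C1 C2 : ℝ, ∀ L : ℕ, 1 ≤ L →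
      (Matrix.of (fun i j : Fin L =>
        ssmKernel A1 A2 A3 A4 B1 B2 C1 C2 (i : ℕ) (j : ℕ))).rank = L := by
  refine ⟨1, 1, 1, 1, 1, 1, 1, 1, fun L hL => ?_⟩
  set B : Matrix (Fin L) (Fin L) ℝ := Matrix.of fun i j : Fin L => ((i : ℕ).choose (j : ℕ) : ℝ)
    with hB
  have hfact : (Matrix.of (fun i j : Fin L =>
      ssmKernel 1 1 1 1 1 1 1 1 (i : ℕ) (j : ℕ))) = (2 : ℝ) • (B * Bᵀ) := by
    ext i j
    simp only [Matrix.of_apply, Matrix.smul_apply, Matrix.mul_apply, Matrix.transpose_apply,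
      hB, smul_eq_mul]
    rw [ssmKernel_ones]
    have : ∑ k : Fin L, ((i : ℕ).choose (k : ℕ) : ℝ) * ((j : ℕ).choose (k : ℕ) : ℝ)
        = (((i : ℕ) + (j : ℕ)).choose (i : ℕ) : ℝ) := by
      rw [← vandermonde_sym (i : ℕ) (j : ℕ)]
      push_cast
      rw [Fin.sum_univ_eq_sum_range (fun k => ((i : ℕ).choose k : ℝ) * ((j : ℕ).choose k : ℝ)) L]
      rw [Finset.sum_subset (Finset.range_subset_range.mpr (Nat.succ_le_of_lt i.isLt))]
      intro k hk hk'
      have : (i : ℕ) < k := by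
        simp [Finset.mem_range] at hk hk'; omega
      rw [Nat.choose_eq_zero_of_lt this]
      norm_num
    rw [this]
  rw [hfact]
  have hdetB : B.det = 1 := by
    rw [Matrix.det_of_lowerTriangular B ?ht]
    · refine Finset.prod_eq_one fun i _ => by simp [hB]
    · intro i j hij
      have : (i : ℕ) < (j : ℕ) := hij
      simp [hB, Nat.choose_eq_zero_of_lt this]
  have hdet : ((2 : ℝ) • (B * Bᵀ)).det ≠ 0 := by
    rw [Matrix.det_smul, Matrix.det_mul, Matrix.det_transpose, hdetB]
    positivity
  have hunit : IsUnit ((2 : ℝ) • (B * Bᵀ)) := by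
    rw [Matrix.isUnit_iff_isUnit_det]
    exact isUnit_iff_ne_zero.mpr hdet
  rw [Matrix.rank_of_isUnit _ hunit, Fintype.card_fin]
end

section
/- For every choice of real parameters A1, A2, A3, A4, B1, B2, C1, C2 of the single-channel scalar 2-D SSM and every input u : ℕ → ℕ → ℝ, the states and output admit a convolution representation: x^h(i,j) = Σ_{0 ≤ î ≤ i} Σ_{0 ≤ ĵ ≤ j} k^h(i−î, j−ĵ)·u(î,ĵ), x^v(i,j) = Σ_{0 ≤ î ≤ i} Σ_{0 ≤ ĵ ≤ j} k^v(i−î, j−ĵ)·u(î,ĵ), and consequently y(i,j) = Σ_{0 ≤ î ≤ i} Σ_{0 ≤ ĵ ≤ j} K(i−î, j−ĵ)·u(î,ĵ), where k^h, k^v are the impulse responses and K = C1·k^h + C2·k^v is the convolution kernel. -/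
section
variable (A1 A2 A3 A4 B1 B2 : ℝ)

lemma kh_succ (m n : ℕ) :
    (ssmState A1 A2 A3 A4 B1 B2 impulse m (n+1)).1 =
      A1 * (ssmState A1 A2 A3 A4 B1 B2 impulse m n).1
        + A2 * (ssmState A1 A2 A3 A4 B1 B2 impulse m n).2 := by
  cases m <;> simp [ssmState, impulse]

lemma kv_succ (m n : ℕ) :
    (ssmState A1 A2 A3 A4 B1 B2 impulse (m+1) n).2 =
      A3 * (ssmState A1 A2 A3 A4 B1 B2 impulse m n).1
        + A4 * (ssmState A1 A2 A3 A4 B1 B2 impulse m n).2 := by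
  cases n <;> simp [ssmState, impulse]

lemma kh_row (m : ℕ) (hm : m ≠ 0) : (ssmState A1 A2 A3 A4 B1 B2 impulse m 0).1 = 0 := by
  cases m with
  | zero => exact absurd rfl hm
  | succ m => simp [ssmState, impulse]

lemma kv_col (n : ℕ) (hn : n ≠ 0) : (ssmState A1 A2 A3 A4 B1 B2 impulse 0 n).2 = 0 := by
  cases n with
  | zero => exact absurd rfl hn
  | succ n => simp [ssmState, impulse]

lemma k00 : ssmState A1 A2 A3 A4 B1 B2 impulse 0 0 = (B1, B2) := by
  simp [ssmState, impulse]

lemma state_succ_fst (u : ℕ → ℕ → ℝ) (i j : ℕ) :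
    (ssmState A1 A2 A3 A4 B1 B2 u i (j+1)).1 =
      A1 * (ssmState A1 A2 A3 A4 B1 B2 u i j).1
        + A2 * (ssmState A1 A2 A3 A4 B1 B2 u i j).2 + B1 * u i (j+1) := by
  cases i <;> rw [ssmState]

lemma state_succ_snd (u : ℕ → ℕ → ℝ) (i j : ℕ) :
    (ssmState A1 A2 A3 A4 B1 B2 u (i+1) j).2 =
      A3 * (ssmState A1 A2 A3 A4 B1 B2 u i j).1
        + A4 * (ssmState A1 A2 A3 A4 B1 B2 u i j).2 + B2 * u (i+1) j := by
  cases j <;> rw [ssmState]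

lemma state_zero_fst (u : ℕ → ℕ → ℝ) (i : ℕ) :
    (ssmState A1 A2 A3 A4 B1 B2 u i 0).1 = B1 * u i 0 := by
  cases i <;> rw [ssmState]

lemma state_zero_snd (u : ℕ → ℕ → ℝ) (j : ℕ) :
    (ssmState A1 A2 A3 A4 B1 B2 u 0 j).2 = B2 * u 0 j := by
  cases j <;> rw [ssmState]

lemma kh_col_sum (w : ℕ → ℝ) (i : ℕ) :
    ∑ ii ∈ Finset.range (i+1),
      (ssmState A1 A2 A3 A4 B1 B2 impulse (i-ii) 0).1 * w ii = B1 * w i := by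
  rw [Finset.sum_range_succ, Finset.sum_eq_zero, Nat.sub_self, k00, zero_add]
  intro ii hii
  rw [kh_row _ _ _ _ _ _ _ (Nat.sub_ne_zero_of_lt (Finset.mem_range.mp hii)), zero_mul]

lemma kv_row_sum (w : ℕ → ℝ) (j : ℕ) :
    ∑ jj ∈ Finset.range (j+1),
      (ssmState A1 A2 A3 A4 B1 B2 impulse 0 (j-jj)).2 * w jj = B2 * w j := by
  rw [Finset.sum_range_succ, Finset.sum_eq_zero, Nat.sub_self, k00, zero_add]
  intro jj hjj
  rw [kv_col _ _ _ _ _ _ _ (Nat.sub_ne_zero_of_lt (Finset.mem_range.mp hjj)), zero_mul]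


variable (u : ℕ → ℕ → ℝ)

/-- Convolution form of the horizontal state on the bottom row. -/
lemma conv_fst_base (i : ℕ) :
    (ssmState A1 A2 A3 A4 B1 B2 u i 0).1 =
      ∑ ii ∈ Finset.range (i + 1), ∑ jj ∈ Finset.range 1,
        (ssmState A1 A2 A3 A4 B1 B2 impulse (i - ii) (0 - jj)).1 * u ii jj := by
  simp only [Finset.sum_range_one, Nat.zero_sub]
  rw [kh_col_sum, state_zero_fst]

/-- Convolution form of the vertical state on the left column. -/
lemma conv_snd_base (j : ℕ) :
    (ssmState A1 A2 A3 A4 B1 B2 u 0 j).2 =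
      ∑ ii ∈ Finset.range 1, ∑ jj ∈ Finset.range (j + 1),
        (ssmState A1 A2 A3 A4 B1 B2 impulse (0 - ii) (j - jj)).2 * u ii jj := by
  simp only [Finset.sum_range_one, Nat.zero_sub]
  rw [kv_row_sum, state_zero_snd]

lemma conv_fst_step (i j : ℕ)
    (h1 : (ssmState A1 A2 A3 A4 B1 B2 u i j).1 =
      ∑ ii ∈ Finset.range (i + 1), ∑ jj ∈ Finset.range (j + 1),
        (ssmState A1 A2 A3 A4 B1 B2 impulse (i - ii) (j - jj)).1 * u ii jj)
    (h2 : (ssmState A1 A2 A3 A4 B1 B2 u i j).2 =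
      ∑ ii ∈ Finset.range (i + 1), ∑ jj ∈ Finset.range (j + 1),
        (ssmState A1 A2 A3 A4 B1 B2 impulse (i - ii) (j - jj)).2 * u ii jj) :
    (ssmState A1 A2 A3 A4 B1 B2 u i (j+1)).1 =
      ∑ ii ∈ Finset.range (i + 1), ∑ jj ∈ Finset.range (j + 2),
        (ssmState A1 A2 A3 A4 B1 B2 impulse (i - ii) (j + 1 - jj)).1 * u ii jj := by
  have key : ∀ ii ∈ Finset.range (i+1),
      ∑ jj ∈ Finset.range (j + 2),
        (ssmState A1 A2 A3 A4 B1 B2 impulse (i - ii) (j + 1 - jj)).1 * u ii jj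
      = (∑ jj ∈ Finset.range (j + 1),
          (A1 * (ssmState A1 A2 A3 A4 B1 B2 impulse (i - ii) (j - jj)).1 * u ii jj
           + A2 * (ssmState A1 A2 A3 A4 B1 B2 impulse (i - ii) (j - jj)).2 * u ii jj))
        + (ssmState A1 A2 A3 A4 B1 B2 impulse (i - ii) 0).1 * u ii (j+1) := by
    intro ii _
    rw [Finset.sum_range_succ, Nat.sub_self]
    congr 1
    refine Finset.sum_congr rfl fun jj hjj => ?_
    rw [Nat.succ_sub (Nat.lt_succ_iff.mp (Finset.mem_range.mp hjj)), kh_succ]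
    ring
  rw [Finset.sum_congr rfl key]
  rw [Finset.sum_add_distrib, kh_col_sum _ _ _ _ _ _ (fun ii => u ii (j+1))]
  simp only [Finset.sum_add_distrib]
  rw [state_succ_fst, h1, h2]
  simp only [Finset.mul_sum]
  ring
lemma conv_snd_step (i j : ℕ)
    (h1 : (ssmState A1 A2 A3 A4 B1 B2 u i j).1 =
      ∑ ii ∈ Finset.range (i + 1), ∑ jj ∈ Finset.range (j + 1),
        (ssmState A1 A2 A3 A4 B1 B2 impulse (i - ii) (j - jj)).1 * u ii jj)
    (h2 : (ssmState A1 A2 A3 A4 B1 B2 u i j).2 =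
      ∑ ii ∈ Finset.range (i + 1), ∑ jj ∈ Finset.range (j + 1),
        (ssmState A1 A2 A3 A4 B1 B2 impulse (i - ii) (j - jj)).2 * u ii jj) :
    (ssmState A1 A2 A3 A4 B1 B2 u (i+1) j).2 =
      ∑ ii ∈ Finset.range (i + 2), ∑ jj ∈ Finset.range (j + 1),
        (ssmState A1 A2 A3 A4 B1 B2 impulse (i + 1 - ii) (j - jj)).2 * u ii jj := by
  rw [Finset.sum_range_succ, Nat.sub_self]
  have key : ∀ ii ∈ Finset.range (i+1),
      ∑ jj ∈ Finset.range (j + 1),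
        (ssmState A1 A2 A3 A4 B1 B2 impulse (i + 1 - ii) (j - jj)).2 * u ii jj
      = ∑ jj ∈ Finset.range (j + 1),
          (A3 * (ssmState A1 A2 A3 A4 B1 B2 impulse (i - ii) (j - jj)).1 * u ii jj
           + A4 * (ssmState A1 A2 A3 A4 B1 B2 impulse (i - ii) (j - jj)).2 * u ii jj) := by
    intro ii hii
    refine Finset.sum_congr rfl fun jj _ => ?_
    rw [Nat.succ_sub (Nat.lt_succ_iff.mp (Finset.mem_range.mp hii)), kv_succ]
    ring
  rw [Finset.sum_congr rfl key, kv_row_sum _ _ _ _ _ _ (u (i+1))]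
  simp only [Finset.sum_add_distrib]
  rw [state_succ_snd, h1, h2]
  simp only [Finset.mul_sum]
  ring

end

/-- The 2-D SSM states and output admit a convolution representation: the states are
the 2-D convolution of the input with the impulse responses `k^h, k^v`, and the
output is the 2-D convolution of the input with the kernel `K = C1·k^h + C2·k^v`. -/
theorem ssm_convolution_representation
    (A1 A2 A3 A4 B1 B2 C1 C2 : ℝ) (u : ℕ → ℕ → ℝ) (i j : ℕ) :
    (ssmState A1 A2 A3 A4 B1 B2 u i j).1 =
      ∑ ii ∈ Finset.range (i + 1), ∑ jj ∈ Finset.range (j + 1),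
        (ssmState A1 A2 A3 A4 B1 B2 impulse (i - ii) (j - jj)).1 * u ii jj ∧
    (ssmState A1 A2 A3 A4 B1 B2 u i j).2 =
      ∑ ii ∈ Finset.range (i + 1), ∑ jj ∈ Finset.range (j + 1),
        (ssmState A1 A2 A3 A4 B1 B2 impulse (i - ii) (j - jj)).2 * u ii jj ∧
    ssmOutput A1 A2 A3 A4 B1 B2 C1 C2 u i j =
      ∑ ii ∈ Finset.range (i + 1), ∑ jj ∈ Finset.range (j + 1),
        ssmKernel A1 A2 A3 A4 B1 B2 C1 C2 (i - ii) (j - jj) * u ii jj := by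
  have main : ∀ i j, (ssmState A1 A2 A3 A4 B1 B2 u i j).1 =
      (∑ ii ∈ Finset.range (i + 1), ∑ jj ∈ Finset.range (j + 1),
        (ssmState A1 A2 A3 A4 B1 B2 impulse (i - ii) (j - jj)).1 * u ii jj) ∧
      (ssmState A1 A2 A3 A4 B1 B2 u i j).2 =
      ∑ ii ∈ Finset.range (i + 1), ∑ jj ∈ Finset.range (j + 1),
        (ssmState A1 A2 A3 A4 B1 B2 impulse (i - ii) (j - jj)).2 * u ii jj := by
    intro i
    induction i with
    | zero =>
      intro j
      induction j with
      | zero =>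
        exact ⟨conv_fst_base _ _ _ _ _ _ _ 0, conv_snd_base _ _ _ _ _ _ _ 0⟩
      | succ j ihj =>
        exact ⟨conv_fst_step _ _ _ _ _ _ _ _ _ ihj.1 ihj.2,
          conv_snd_base _ _ _ _ _ _ _ (j + 1)⟩
    | succ i ihi =>
      intro j
      induction j with
      | zero =>
        exact ⟨conv_fst_base _ _ _ _ _ _ _ (i + 1),
          conv_snd_step _ _ _ _ _ _ _ _ _ (ihi 0).1 (ihi 0).2⟩
      | succ j ihj =>
        exact ⟨conv_fst_step _ _ _ _ _ _ _ _ _ ihj.1 ihj.2,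
          conv_snd_step _ _ _ _ _ _ _ _ _ (ihi (j + 1)).1 (ihi (j + 1)).2⟩
  refine ⟨(main i j).1, (main i j).2, ?_⟩
  rw [ssmOutput, (main i j).1, (main i j).2]
  simp only [ssmKernel, ssmOutput, Finset.mul_sum]
  rw [← Finset.sum_add_distrib]
  refine Finset.sum_congr rfl fun ii _ => ?_
  rw [← Finset.sum_add_distrib]
  exact Finset.sum_congr rfl fun jj _ => by ring
end

section
/- For the single-channel scalar 2-D SSM with the restricted parameters A1 = A2 = A3 = 1, A4 = 0, B1 = 1, B2 = 0, C1 = 1, C2 = 0, and for every input u : ℕ → ℕ → ℝ, the output satisfies y(i,j) = y(i,j−1) + y(i−1,j−1) + u(i,j) (terms with a negative index taken as 0), and admits the closed form y(i,j) = Σ_{0 ≤ î ≤ i} Σ_{0 ≤ ĵ ≤ j} C(j−ĵ, i−î)·u(î,ĵ), where C(n, k) denotes the binomial coefficient (which is 0 when k > n). -/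
namespace SsmAux

variable (u : ℕ → ℕ → ℝ)

lemma state2_zero (j : ℕ) : (ssmState 1 1 1 0 1 0 u 0 j).2 = 0 := by
  cases j <;> simp [ssmState]

lemma state2_succ (i j : ℕ) :
    (ssmState 1 1 1 0 1 0 u (i+1) j).2 = (ssmState 1 1 1 0 1 0 u i j).1 := by
  cases j <;> simp [ssmState]

lemma out_eq (i j : ℕ) : ssmOutput 1 1 1 0 1 0 1 0 u i j = (ssmState 1 1 1 0 1 0 u i j).1 := by
  simp [ssmOutput]

lemma rec1 (i : ℕ) : ssmOutput 1 1 1 0 1 0 1 0 u i 0 = u i 0 := by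
  cases i <;> simp [out_eq, ssmState]

lemma rec2 (j : ℕ) : ssmOutput 1 1 1 0 1 0 1 0 u 0 (j + 1) =
    ssmOutput 1 1 1 0 1 0 1 0 u 0 j + u 0 (j + 1) := by
  simp [out_eq, ssmState, state2_zero]

lemma rec3 (i j : ℕ) : ssmOutput 1 1 1 0 1 0 1 0 u (i + 1) (j + 1) =
    ssmOutput 1 1 1 0 1 0 1 0 u (i + 1) j
      + ssmOutput 1 1 1 0 1 0 1 0 u i j + u (i + 1) (j + 1) := by
  simp [out_eq, ssmState, state2_succ]

/-- The closed-form double sum. -/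
noncomputable def S (i j : ℕ) : ℝ :=
  ∑ ii ∈ Finset.range (i + 1), ∑ jj ∈ Finset.range (j + 1),
    ((j - jj).choose (i - ii) : ℝ) * u ii jj

lemma S_i0 (i : ℕ) : S u i 0 = u i 0 := by
  unfold S
  rw [Finset.sum_eq_single i]
  · simp
  · intro ii hii hne
    have h : 0 < i - ii := Nat.sub_pos_of_lt (lt_of_le_of_ne
      (Nat.lt_succ_iff.mp (Finset.mem_range.mp hii)) hne)
    simp [Nat.choose_eq_zero_of_lt h]
  · intro h; exact absurd (Finset.self_mem_range_succ i) h

lemma S_0j (j : ℕ) : S u 0 (j + 1) = S u 0 j + u 0 (j + 1) := by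
  unfold S
  simp [Finset.sum_range_succ]

lemma S_rec (i j : ℕ) : S u (i + 1) (j + 1) = S u (i + 1) j + S u i j + u (i + 1) (j + 1) := by
  unfold S
  -- split off jj = j + 1
  have h1 : ∀ ii ∈ Finset.range (i + 2),
      ∑ jj ∈ Finset.range (j + 2), ((j + 1 - jj).choose (i + 1 - ii) : ℝ) * u ii jj
        = (∑ jj ∈ Finset.range (j + 1), ((j + 1 - jj).choose (i + 1 - ii) : ℝ) * u ii jj)
          + ((0 : ℕ).choose (i + 1 - ii) : ℝ) * u ii (j + 1) := by
    intro ii _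
    rw [Finset.sum_range_succ]
    simp
  rw [Finset.sum_congr rfl h1, Finset.sum_add_distrib]
  have h2 : ∑ ii ∈ Finset.range (i + 2), ((0 : ℕ).choose (i + 1 - ii) : ℝ) * u ii (j + 1)
      = u (i + 1) (j + 1) := by
    rw [Finset.sum_eq_single (i + 1)]
    · simp
    · intro ii hii hne
      have h : 0 < i + 1 - ii := Nat.sub_pos_of_lt (lt_of_le_of_ne
        (Nat.lt_succ_iff.mp (Finset.mem_range.mp hii)) hne)
      rw [Nat.choose_eq_zero_of_lt h]
      simp
    · intro h; exact absurd (Finset.self_mem_range_succ (i + 1)) h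
  rw [h2]
  -- now handle the main part: use Pascal on the range (i+1) part, plus the ii = i+1 term
  have h3 : ∀ ii ∈ Finset.range (i + 2),
      ∑ jj ∈ Finset.range (j + 1), ((j + 1 - jj).choose (i + 1 - ii) : ℝ) * u ii jj
        = (∑ jj ∈ Finset.range (j + 1), ((j - jj).choose (i + 1 - ii) : ℝ) * u ii jj)
          + (if ii ≤ i then
              ∑ jj ∈ Finset.range (j + 1), ((j - jj).choose (i - ii) : ℝ) * u ii jj else 0) := by
    intro ii hii
    by_cases hle : ii ≤ i
    · rw [if_pos hle, ← Finset.sum_add_distrib]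
      apply Finset.sum_congr rfl
      intro jj hjj
      have hjle : jj ≤ j := Nat.lt_succ_iff.mp (Finset.mem_range.mp hjj)
      have e1 : j + 1 - jj = (j - jj) + 1 := by omega
      have e2 : i + 1 - ii = (i - ii) + 1 := by omega
      rw [e1, e2, Nat.choose_succ_succ]
      push_cast
      ring
    · rw [if_neg hle]
      have hii' : ii = i + 1 := by
        have := Finset.mem_range.mp hii; omega
      subst hii'
      simp
  rw [Finset.sum_congr rfl h3, Finset.sum_add_distrib]
  have hB : ∑ ii ∈ Finset.range (i + 2),
      (if ii ≤ i then
        ∑ jj ∈ Finset.range (j + 1), ((j - jj).choose (i - ii) : ℝ) * u ii jj else 0)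
      = ∑ ii ∈ Finset.range (i + 1),
          ∑ jj ∈ Finset.range (j + 1), ((j - jj).choose (i - ii) : ℝ) * u ii jj := by
    rw [Finset.sum_range_succ, if_neg (by omega), add_zero]
    exact Finset.sum_congr rfl fun ii hii =>
      if_pos (Nat.lt_succ_iff.mp (Finset.mem_range.mp hii))
  rw [hB]

lemma closed_form (i j : ℕ) : ssmOutput 1 1 1 0 1 0 1 0 u i j = S u i j := by
  induction j generalizing i with
  | zero => rw [rec1, S_i0]
  | succ j ih =>
    cases i with
    | zero => rw [rec2, S_0j, ih]
    | succ i => rw [rec3, S_rec, ih, ih]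

end SsmAux

/-- For the restricted parameters `A1 = A2 = A3 = 1, A4 = 0, B1 = 1, B2 = 0,
C1 = 1, C2 = 0`, the output satisfies the simplified recurrence
`y(i,j) = y(i,j−1) + y(i−1,j−1) + u(i,j)` (negative-index terms taken as 0)
and the binomial closed form. -/
theorem ssm_restricted_recurrence_and_closed_form (u : ℕ → ℕ → ℝ) :
    (∀ i : ℕ, ssmOutput 1 1 1 0 1 0 1 0 u i 0 = u i 0) ∧
    (∀ j : ℕ, ssmOutput 1 1 1 0 1 0 1 0 u 0 (j + 1) =
        ssmOutput 1 1 1 0 1 0 1 0 u 0 j + u 0 (j + 1)) ∧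
    (∀ i j : ℕ, ssmOutput 1 1 1 0 1 0 1 0 u (i + 1) (j + 1) =
        ssmOutput 1 1 1 0 1 0 1 0 u (i + 1) j
          + ssmOutput 1 1 1 0 1 0 1 0 u i j + u (i + 1) (j + 1)) ∧
    (∀ i j : ℕ, ssmOutput 1 1 1 0 1 0 1 0 u i j =
        ∑ ii ∈ Finset.range (i + 1), ∑ jj ∈ Finset.range (j + 1),
          ((j - jj).choose (i - ii) : ℝ) * u ii jj) := by
  exact ⟨SsmAux.rec1 u, SsmAux.rec2 u, SsmAux.rec3 u, fun i j => SsmAux.closed_form u i j⟩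
end

section
/- For the single-channel scalar 2-D SSM with the restricted parameters A1 = A2 = A3 = 1, A4 = 0, B1 = 1, B2 = 0, C1 = 1, C2 = 0, the convolution kernel equals a rotation of Pascal's triangle: K(i,j) = C(j, i) for all i, j ∈ ℕ, where C(j, i) denotes the binomial coefficient 'j choose i' (equal to 0 when i > j). -/
lemma ssm_key : ∀ i j : ℕ, ssmState 1 1 1 0 1 0 impulse i j =
    ((j.choose i : ℝ), if i = 0 then 0 else ((j.choose (i-1) : ℝ))) := by
  intro i
  induction i with
  | zero =>
    intro j
    induction j with
    | zero => simp [ssmState, impulse]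
    | succ j ihj => simp [ssmState, impulse, ihj]
  | succ i ih =>
    intro j
    induction j with
    | zero => simp [ssmState, impulse, ih 0]
    | succ j ihj =>
      rw [ssmState, ihj, ih (j+1)]
      simp [impulse, Nat.choose_succ_succ]
      ring

/-- For the restricted parameters `A1 = A2 = A3 = 1, A4 = 0, B1 = 1, B2 = 0,
C1 = 1, C2 = 0`, the convolution kernel is a rotation of Pascal's triangle:
`K(i,j) = C(j,i)`. -/
theorem ssm_restricted_kernel_is_pascal (i j : ℕ) :
    ssmKernel 1 1 1 0 1 0 1 0 i j = (j.choose i : ℝ) := by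
  simp [ssmKernel, ssmOutput, ssm_key]
end

section
/- For the single-channel scalar 2-D SSM with the restricted parameters A1 = A2 = A3 = 1, A4 = 0, B1 = 1, B2 = 0, C1 = 1, C2 = 0, the convolution kernel K satisfies: (i) K(i,j) = 0 whenever i > j (the associated matrix is upper triangular), (ii) K(i,i) = 1 for all i ∈ ℕ (the diagonal consists of nonzero elements), and (iii) K(0,j) = 1 for all j ∈ ℕ. -/
private lemma v0 (j : ℕ) : (ssmState 1 1 1 0 1 0 impulse 0 j).2 = 0 := by
  cases j <;> simp [ssmState]

private lemma hv (i j : ℕ) :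
    (ssmState 1 1 1 0 1 0 impulse (i+1) j).2 = (ssmState 1 1 1 0 1 0 impulse i j).1 := by
  cases j <;> simp [ssmState]

private lemma h0 (j : ℕ) : (ssmState 1 1 1 0 1 0 impulse 0 j).1 = 1 := by
  induction j with
  | zero => simp [ssmState, impulse]
  | succ j ih => simp [ssmState, ih, v0, impulse]

private lemma hi0 (i : ℕ) : (ssmState 1 1 1 0 1 0 impulse (i+1) 0).1 = 0 := by
  simp [ssmState, impulse]

private lemma hrec (i j : ℕ) :
    (ssmState 1 1 1 0 1 0 impulse (i+1) (j+1)).1 =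
      (ssmState 1 1 1 0 1 0 impulse (i+1) j).1 + (ssmState 1 1 1 0 1 0 impulse i j).1 := by
  conv_lhs => rw [ssmState]
  simp [hv, impulse]

private lemma hzero : ∀ i j : ℕ, j < i → (ssmState 1 1 1 0 1 0 impulse i j).1 = 0 := by
  intro i
  induction i with
  | zero => intro j h; omega
  | succ i ih =>
    intro j
    induction j with
    | zero => intro _; exact hi0 i
    | succ j ihj =>
      intro h
      rw [hrec, ihj (by omega), ih j (by omega), add_zero]

private lemma hdiag : ∀ i : ℕ, (ssmState 1 1 1 0 1 0 impulse i i).1 = 1 := by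
  intro i
  induction i with
  | zero => simp [ssmState, impulse]
  | succ i ih => rw [hrec, hzero (i+1) i (by omega), ih, zero_add]

/-- For the restricted parameters `A1 = A2 = A3 = 1, A4 = 0, B1 = 1, B2 = 0,
C1 = 1, C2 = 0`, the kernel matrix is upper triangular, has unit diagonal,
and has first row identically one. -/
theorem ssm_restricted_kernel_triangular :
    (∀ i j : ℕ, j < i → ssmKernel 1 1 1 0 1 0 1 0 i j = 0) ∧
    (∀ i : ℕ, ssmKernel 1 1 1 0 1 0 1 0 i i = 1) ∧
    (∀ j : ℕ, ssmKernel 1 1 1 0 1 0 1 0 0 j = 1) := by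
  refine ⟨fun i j h => ?_, fun i => ?_, fun j => ?_⟩ <;>
    simp [ssmKernel, ssmOutput, hzero, hdiag, h0, *]
end

section
/- The single-channel scalar 2-D SSM is translation equivariant: for every choice of real parameters A1, A2, A3, A4, B1, B2, C1, C2, every input u : ℕ → ℕ → ℝ, and every shift (s, t) ∈ ℕ × ℕ, if the shifted input u' is defined by u'(i,j) = u(i−s, j−t) when i ≥ s and j ≥ t, and u'(i,j) = 0 otherwise, then the corresponding output y' satisfies y'(i,j) = y(i−s, j−t) when i ≥ s and j ≥ t, and y'(i,j) = 0 otherwise, where y is the output on input u. -/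
private lemma ssm_shift_state (A1 A2 A3 A4 B1 B2 : ℝ) (u : ℕ → ℕ → ℝ) (s t : ℕ) :
    ∀ i j, ssmState A1 A2 A3 A4 B1 B2
        (fun i' j' => if s ≤ i' ∧ t ≤ j' then u (i' - s) (j' - t) else 0) i j =
      if s ≤ i ∧ t ≤ j then ssmState A1 A2 A3 A4 B1 B2 u (i - s) (j - t) else (0, 0) := by
  intro i
  induction i with
  | zero =>
    intro j
    induction j with
    | zero =>
      rw [ssmState]
      by_cases h : s ≤ 0 ∧ t ≤ 0
      · obtain ⟨hs, ht⟩ := h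
        have hs0 : s = 0 := Nat.le_zero.mp hs
        have ht0 : t = 0 := Nat.le_zero.mp ht
        subst hs0; subst ht0
        simp [ssmState]
      · have h1 : ¬ s ≤ 0 ∨ ¬ t ≤ 0 := by omega
        rcases h1 with h1 | h1 <;> simp [h1]
    | succ j ihj =>
      rw [ssmState, ihj]
      by_cases hs : s = 0
      · subst hs
        by_cases ht : t ≤ j + 1
        · by_cases ht' : t ≤ j
          · have e : j + 1 - t = (j - t) + 1 := by omega
            simp only [Nat.zero_le, ht, ht', true_and, if_true, e]
            rw [ssmState]
          · have ht1 : t = j + 1 := by omega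
            subst ht1
            have h2 : ¬ (j + 1 ≤ j) := by omega
            simp only [Nat.zero_le, le_refl, true_and, if_true, if_neg h2,
              Nat.sub_self, Nat.zero_sub]
            rw [ssmState]
            simp
        · have ht2 : ¬ t ≤ j := by omega
          simp [ht, ht2]
      · have hs1 : ¬ s ≤ 0 := by omega
        simp [hs1]
  | succ i ihi =>
    intro j
    induction j with
    | zero =>
      rw [ssmState, ihi]
      by_cases ht : t = 0
      · subst ht
        by_cases hs : s ≤ i + 1
        · by_cases hs' : s ≤ i
          · have e : i + 1 - s = (i - s) + 1 := by omega
            simp only [Nat.zero_le, hs, hs', and_true, if_true, e]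
            rw [ssmState]
          · have hs1 : s = i + 1 := by omega
            subst hs1
            have h2 : ¬ (i + 1 ≤ i) := by omega
            simp only [le_refl, Nat.zero_le, and_true, if_true, if_neg h2,
              Nat.sub_self]
            rw [ssmState]
            simp
        · have hs2 : ¬ s ≤ i := by omega
          simp [hs, hs2]
      · have ht1 : ¬ t ≤ 0 := by omega
        simp [ht1]
    | succ j ihj =>
      rw [ssmState, ihj, ihi]
      by_cases hs : s ≤ i + 1
      · by_cases ht : t ≤ j + 1
        · by_cases hs' : s ≤ i
          · by_cases ht' : t ≤ j
            · have e1 : j + 1 - t = (j - t) + 1 := by omega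
              have e2 : i + 1 - s = (i - s) + 1 := by omega
              simp only [hs, ht, hs', ht', true_and, and_true, if_true, e1, e2]
              rw [ssmState]
            · have ht1 : t = j + 1 := by omega
              subst ht1
              have e2 : i + 1 - s = (i - s) + 1 := by omega
              have h2 : ¬ (j + 1 ≤ j) := by omega
              simp [hs, hs', h2, e2, Nat.sub_self]
              rw [ssmState]
          · have hs1 : s = i + 1 := by omega
            subst hs1
            have h2 : ¬ (i + 1 ≤ i) := by omega
            by_cases ht' : t ≤ j
            · have e1 : j + 1 - t = (j - t) + 1 := by omega
              simp [ht, ht', h2, e1, Nat.sub_self]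
              rw [ssmState]
            · have ht1 : t = j + 1 := by omega
              subst ht1
              have h3 : ¬ (j + 1 ≤ j) := by omega
              simp [h2, h3, Nat.sub_self]
              rw [ssmState]
        · have ht2 : ¬ t ≤ j := by omega
          simp [ht, ht2]
      · have hs2 : ¬ s ≤ i := by omega
        simp [hs, hs2]

/-- The single-channel scalar 2-D SSM is translation equivariant: shifting the input
by `(s, t)` (padding with zeros) shifts the output by `(s, t)`. -/
theorem ssm_translation_equivariant
    (A1 A2 A3 A4 B1 B2 C1 C2 : ℝ) (u : ℕ → ℕ → ℝ) (s t : ℕ) (i j : ℕ) :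
    ssmOutput A1 A2 A3 A4 B1 B2 C1 C2
        (fun i' j' => if s ≤ i' ∧ t ≤ j' then u (i' - s) (j' - t) else 0) i j =
      if s ≤ i ∧ t ≤ j then ssmOutput A1 A2 A3 A4 B1 B2 C1 C2 u (i - s) (j - t) else 0 := by
  unfold ssmOutput
  rw [ssm_shift_state]
  split_ifs with h <;> simp
end
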